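/- Let γ, ρ, α_s, α_l, k_s, k_l, q₀ be positive real constants and T₀ a real constant. The function F : (0,∞) → ℝ defined by F(x) = T₀ + (γρα_l/k_l) · Q((√α_s/√α_l) x) − (q₀/k_l)·√(α_l π)· e^{−x²} · F₁((√α_s/√α_l) x) is strictly increasing on (0,∞), with F(x) → T₀ − (q₀/k_l)√(π α_l) as x → 0⁺ and F(x) → T₀ + γρα_l/k_l as x → +∞. -/

import Mathlib

open Real Filter Set

/-- Gauss error function `erf x = (2/√π) ∫₀ˣ e^{−t²} dt`. -/
noncomputable def erf (x : ℝ) : ℝ := (2 / Real.sqrt π) * ∫ t in (0:ℝ)..x, Real.exp (-t ^ 2)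

/-- Complementary error function. -/
noncomputable def erfc (x : ℝ) : ℝ := 1 - erf x

/-- `Q(x) = √π · x · e^{x²} · erfc(x)`. -/
noncomputable def Qf (x : ℝ) : ℝ := Real.sqrt π * x * Real.exp (x ^ 2) * erfc x

/-- `F₁(x) = erfc(x) · e^{x²}`. -/
noncomputable def F1f (x : ℝ) : ℝ := erfc x * Real.exp (x ^ 2)

/-- `F(x) = T₀ + (γρα_l/k_l)·Q((√α_s/√α_l)x) − (q₀/k_l)·√(α_l π)·e^{−x²}·F₁((√α_s/√α_l)x)`. -/
noncomputable def Ff (γ ρ αs αl kl q₀ T₀ : ℝ) (x : ℝ) : ℝ :=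
  T₀ + (γ * ρ * αl / kl) * Qf ((Real.sqrt αs / Real.sqrt αl) * x)
    - (q₀ / kl) * Real.sqrt (αl * π) * Real.exp (-x ^ 2)
        * F1f ((Real.sqrt αs / Real.sqrt αl) * x)

/-! With `F₁(y) = e^{y²} erfc y` and `c = √α_s/√α_l`, the function is
`F(x) = T₀ + A·(cx)F₁(cx) − B·e^{−x²}F₁(cx)` with `A, B > 0`. Since `F₁' = 2yF₁ − 2/√π`,
comparing derivatives (both sides vanish at `∞`) gives the Mills-ratio bounds
`2y/(√π(1 + 2y²)) < F₁(y)` for all `y` and `F₁(y) < 1/(√π y)` for `y > 0`.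
The lower bound makes `y F₁(y)` strictly increasing; the upper bound makes `e^{−x²}F₁(cx)`
strictly decreasing on `x ≥ 0` (when `c > 1` it bounds `2x(c² − 1)F₁(cx)` by `2(c² − 1)/(√π c)`).
The two bounds also squeeze `y F₁(y) → 1/√π` and `F₁(y) → 0`, giving the limit at `∞`;
the limit at `0⁺` is continuity together with `erfc 0 = 1`. -/

open Topology

lemma hasDerivAt_erfc (y : ℝ) : HasDerivAt erfc (-(2 / √π * exp (-y ^ 2))) y := by
  have hint := (by fun_prop : Continuous fun t : ℝ => exp (-t ^ 2)).integral_hasStrictDerivAt 0 y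
  exact (hint.hasDerivAt.const_mul (2 / √π)).const_sub 1

lemma continuous_erfc : Continuous erfc :=
  continuous_iff_continuousAt.2 fun y => (hasDerivAt_erfc y).continuousAt

lemma erfc_zero : erfc 0 = 1 := by simp [erfc, erf]

lemma tendsto_erfc_atTop : Tendsto erfc atTop (𝓝 0) := by
  have hint : Tendsto (fun y => ∫ t in (0 : ℝ)..y, exp (-t ^ 2)) atTop (𝓝 (√π / 2)) := by
    have h := MeasureTheory.intervalIntegral_tendsto_integral_Ioi (f := fun t : ℝ => exp (-t ^ 2))
      0 (by simpa using (integrable_exp_neg_mul_sq one_pos).integrableOn) tendsto_id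
    have hval : ∫ t in Ioi (0 : ℝ), exp (-t ^ 2) = √π / 2 := by
      simpa using integral_gaussian_Ioi 1
    rwa [hval] at h
  have h := (hint.const_mul (2 / √π)).const_sub 1
  have hπ : √π ≠ 0 := by positivity
  rwa [div_mul_div_cancel₀ hπ, div_self two_ne_zero, sub_self] at h

lemma pos_of_hasDerivAt_neg_of_tendsto_zero {f f' : ℝ → ℝ} {a : ℝ}
    (hf : ∀ x ≥ a, HasDerivAt f (f' x) x) (hf' : ∀ x > a, f' x < 0)
    (hlim : Tendsto f atTop (𝓝 0)) : 0 < f a := by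
  have hanti : StrictAntiOn f (Ici a) := by
    refine strictAntiOn_of_deriv_neg (convex_Ici a)
      (fun x hx => (hf x hx).continuousAt.continuousWithinAt) fun x hx => ?_
    rw [interior_Ici] at hx
    rw [(hf x (le_of_lt hx)).deriv]
    exact hf' x hx
  have hnonneg : 0 ≤ f (a + 1) :=
    le_of_tendsto hlim <| (eventually_ge_atTop (a + 1)).mono fun x hx =>
      hanti.antitoneOn (by simp) (by simp; linarith) hx
  linarith [hanti self_mem_Ici (by simp : a + 1 ∈ Ici a) (by linarith)]

lemma hasDerivAt_exp_neg_sq (z : ℝ) :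
    HasDerivAt (fun t => exp (-t ^ 2)) (-(2 * z * exp (-z ^ 2))) z := by
  have h : HasDerivAt (fun t : ℝ => -t ^ 2) (-(2 * z)) z :=
    (hasDerivAt_pow 2 z).neg.congr_deriv (by ring)
  exact h.exp.congr_deriv (by ring)

lemma tendsto_exp_neg_sq_atTop : Tendsto (fun z : ℝ => exp (-z ^ 2)) atTop (𝓝 0) :=
  tendsto_exp_atBot.comp (tendsto_neg_atTop_atBot.comp (tendsto_pow_atTop two_ne_zero))

lemma erfc_lt_of_pos {y : ℝ} (hy : 0 < y) : erfc y < exp (-y ^ 2) / (√π * y) := by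
  have hπ : 0 < √π := by positivity
  suffices 0 < exp (-y ^ 2) / (√π * y) - erfc y by linarith
  refine pos_of_hasDerivAt_neg_of_tendsto_zero (a := y)
    (f := fun z => exp (-z ^ 2) / (√π * z) - erfc z) (f' := fun z => -(exp (-z ^ 2) / (√π * z ^ 2)))
    (fun z hz => ?_) (fun z hz => ?_) ?_
  · have hz : z ≠ 0 := (hy.trans_le hz).ne'
    have h := ((hasDerivAt_exp_neg_sq z).div ((hasDerivAt_id' z).const_mul √π)
      (by simp [hz, hπ.ne'])).sub (hasDerivAt_erfc z)
    refine h.congr_deriv ?_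
    field_simp
    ring
  · have : 0 < exp (-z ^ 2) / (√π * z ^ 2) := by have := hy.trans hz; positivity
    linarith
  · have h := (tendsto_exp_neg_sq_atTop.mul (tendsto_inv_atTop_zero.comp
      (tendsto_id.const_mul_atTop hπ))).sub tendsto_erfc_atTop
    simpa [div_eq_mul_inv] using h

lemma lt_erfc (y : ℝ) :
    2 * y * exp (-y ^ 2) / (√π * (1 + 2 * y ^ 2)) < erfc y := by
  have hπ : 0 < √π := by positivity
  suffices 0 < erfc y - 2 * y * exp (-y ^ 2) / (√π * (1 + 2 * y ^ 2)) by linarith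
  refine pos_of_hasDerivAt_neg_of_tendsto_zero (a := y)
    (f := fun z => erfc z - 2 * z * exp (-z ^ 2) / (√π * (1 + 2 * z ^ 2)))
    (f' := fun z => -(4 * exp (-z ^ 2) / (√π * (1 + 2 * z ^ 2) ^ 2)))
    (fun z _ => ?_) (fun z _ => ?_) ?_
  · have hnum := ((hasDerivAt_id' z).const_mul 2).mul (hasDerivAt_exp_neg_sq z)
    have hden := (((hasDerivAt_pow 2 z).const_mul 2).const_add 1).const_mul √π
    have h := (hasDerivAt_erfc z).sub (hnum.div hden (by positivity))
    refine h.congr_deriv ?_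
    simp only [Pi.mul_apply]
    field_simp
    ring
  · have : 0 < 4 * exp (-z ^ 2) / (√π * (1 + 2 * z ^ 2) ^ 2) := by positivity
    linarith
  · have hterm : Tendsto (fun z => 2 * z * exp (-z ^ 2) / (√π * (1 + 2 * z ^ 2))) atTop (𝓝 0) := by
      refine squeeze_zero' ?_ ?_ (by simpa using tendsto_exp_neg_sq_atTop.div_const √π)
      · filter_upwards [eventually_ge_atTop 0] with z hz
        positivity
      · filter_upwards with z
        rw [div_le_div_iff₀ (by positivity) hπ]
        have : 0 ≤ 1 + 2 * z ^ 2 - 2 * z := by nlinarith [sq_nonneg (z - 1)]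
        nlinarith [mul_nonneg (mul_pos (exp_pos (-z ^ 2)) hπ).le this]
    simpa using tendsto_erfc_atTop.sub hterm

lemma hasDerivAt_F1f (y : ℝ) : HasDerivAt F1f (2 * y * F1f y - 2 / √π) y := by
  have hsq : HasDerivAt (fun t : ℝ => t ^ 2) (2 * y) y := (hasDerivAt_pow 2 y).congr_deriv (by ring)
  refine ((hasDerivAt_erfc y).mul hsq.exp).congr_deriv ?_
  have : exp (-y ^ 2) * exp (y ^ 2) = 1 := by rw [← exp_add, neg_add_cancel, exp_zero]
  unfold F1f
  linear_combination (-(2 / √π)) * this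

lemma F1f_lt_of_pos {y : ℝ} (hy : 0 < y) : F1f y < 1 / (√π * y) := by
  have h := mul_lt_mul_of_pos_right (erfc_lt_of_pos hy) (exp_pos (y ^ 2))
  rwa [div_mul_eq_mul_div, ← exp_add, neg_add_cancel, exp_zero] at h

lemma lt_F1f (y : ℝ) : 2 * y / (√π * (1 + 2 * y ^ 2)) < F1f y := by
  have h := mul_lt_mul_of_pos_right (lt_erfc y) (exp_pos (y ^ 2))
  rwa [div_mul_eq_mul_div, mul_assoc, ← exp_add, neg_add_cancel, exp_zero, mul_one] at h

lemma F1f_pos {y : ℝ} (hy : 0 ≤ y) : 0 < F1f y :=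
  lt_of_le_of_lt (by positivity) (lt_F1f y)

lemma tendsto_F1f_atTop : Tendsto F1f atTop (𝓝 0) := by
  have hπ : 0 < √π := by positivity
  refine squeeze_zero' ?_ ?_ (tendsto_inv_atTop_zero.comp (tendsto_id.const_mul_atTop hπ))
  · filter_upwards [eventually_ge_atTop 0] with y hy
    exact (F1f_pos hy).le
  · filter_upwards [eventually_gt_atTop 0] with y hy
    simpa using (F1f_lt_of_pos hy).le

lemma tendsto_mul_F1f_atTop : Tendsto (fun y => y * F1f y) atTop (𝓝 (1 / √π)) := by
  have hπ : 0 < √π := by positivity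
  have hlower : Tendsto (fun y : ℝ => 1 / √π - 1 / (√π * (1 + 2 * y ^ 2))) atTop (𝓝 (1 / √π)) := by
    have h := tendsto_inv_atTop_zero.comp (((tendsto_const_nhds (x := (1 : ℝ))).add_atTop
      ((tendsto_pow_atTop two_ne_zero).const_mul_atTop two_pos)).const_mul_atTop hπ)
    simpa using (tendsto_const_nhds (x := 1 / √π)).sub h
  refine tendsto_of_tendsto_of_tendsto_of_le_of_le' hlower tendsto_const_nhds ?_ ?_
  · filter_upwards [eventually_gt_atTop 0] with y hy
    calc 1 / √π - 1 / (√π * (1 + 2 * y ^ 2)) = y * (2 * y / (√π * (1 + 2 * y ^ 2))) := by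
          field_simp
          ring
      _ ≤ y * F1f y := mul_le_mul_of_nonneg_left (lt_F1f y).le hy.le
  · filter_upwards [eventually_gt_atTop 0] with y hy
    calc y * F1f y ≤ y * (1 / (√π * y)) := mul_le_mul_of_nonneg_left (F1f_lt_of_pos hy).le hy.le
      _ = 1 / √π := by field_simp

lemma strictMono_mul_F1f : StrictMono fun y => y * F1f y := by
  refine strictMono_of_hasDerivAt_pos (f' := fun y => (1 + 2 * y ^ 2) * F1f y - 2 * y / √π)
    (fun y => ((hasDerivAt_id' y).mul (hasDerivAt_F1f y)).congr_deriv (by ring)) fun y => ?_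
  have hπ : 0 < √π := by positivity
  have h := lt_F1f y
  rw [div_lt_iff₀ (by positivity)] at h
  rw [sub_pos, div_lt_iff₀ hπ]
  linarith

lemma strictAntiOn_exp_neg_sq_mul_F1f {c : ℝ} (hc : 0 < c) :
    StrictAntiOn (fun x => exp (-x ^ 2) * F1f (c * x)) (Ici 0) := by
  have hπ : 0 < √π := by positivity
  have hderiv : ∀ x, HasDerivAt (fun x => exp (-x ^ 2) * F1f (c * x))
      (exp (-x ^ 2) * (2 * x * (c ^ 2 - 1) * F1f (c * x) - 2 * c / √π)) x := fun x =>
    ((hasDerivAt_exp_neg_sq x).mul ((hasDerivAt_F1f (c * x)).comp x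
      ((hasDerivAt_id' x).const_mul c))).congr_deriv (by rw [Function.comp_apply]; ring)
  refine strictAntiOn_of_deriv_neg (convex_Ici 0)
    (fun x _ => (hderiv x).continuousAt.continuousWithinAt) fun x hx => ?_
  rw [interior_Ici, mem_Ioi] at hx
  rw [(hderiv x).deriv]
  refine mul_neg_of_pos_of_neg (exp_pos _) (sub_neg.2 ?_)
  have hcx : 0 < c * x := mul_pos hc hx
  rcases le_or_gt (c ^ 2) 1 with hc1 | hc1
  · have : 2 * x * (c ^ 2 - 1) * F1f (c * x) ≤ 0 :=
      mul_nonpos_of_nonpos_of_nonneg (mul_nonpos_of_nonneg_of_nonpos (by positivity) (by linarith))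
        (F1f_pos hcx.le).le
    have : 0 < 2 * c / √π := by positivity
    linarith
  · calc 2 * x * (c ^ 2 - 1) * F1f (c * x) < 2 * x * (c ^ 2 - 1) * (1 / (√π * (c * x))) :=
          mul_lt_mul_of_pos_left (F1f_lt_of_pos hcx) (by have := sub_pos.2 hc1; positivity)
      _ = 2 * (c ^ 2 - 1) / (√π * c) := by field_simp
      _ < 2 * c / √π := by
          rw [div_lt_div_iff₀ (by positivity) hπ]
          nlinarith

lemma Qf_eq_mul_F1f (y : ℝ) : Qf y = √π * (y * F1f y) := by
  unfold Qf F1f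
  ring

theorem Ff_strictMonoOn_limits_general (γ ρ αs αl kl q₀ T₀ : ℝ)
    (hγ : 0 < γ) (hρ : 0 < ρ) (hαs : 0 < αs) (hαl : 0 < αl)
    (hkl : 0 < kl) (hq₀ : 0 < q₀) :
    StrictMonoOn (Ff γ ρ αs αl kl q₀ T₀) (Set.Ioi (0 : ℝ)) ∧
    Tendsto (Ff γ ρ αs αl kl q₀ T₀) (nhdsWithin 0 (Set.Ioi 0))
      (nhds (T₀ - (q₀ / kl) * Real.sqrt (π * αl))) ∧
    Tendsto (Ff γ ρ αs αl kl q₀ T₀) atTop (nhds (T₀ + γ * ρ * αl / kl)) := by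
  set c := √αs / √αl
  have hc : 0 < c := div_pos (sqrt_pos.2 hαs) (sqrt_pos.2 hαl)
  have hπ : 0 < √π := by positivity
  set A := γ * ρ * αl / kl * √π
  set B := q₀ / kl * √(αl * π)
  have hA : 0 < A := by positivity
  have hB : 0 < B := by positivity
  have hF : Ff γ ρ αs αl kl q₀ T₀ =
      fun x => T₀ + A * (c * x * F1f (c * x)) - B * (exp (-x ^ 2) * F1f (c * x)) := by
    ext x
    simp only [Ff, Qf_eq_mul_F1f, A, B, c]
    ring
  refine ⟨fun x hx y hy hxy => ?_, ?_, ?_⟩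
  · have hQ := strictMono_mul_F1f (mul_lt_mul_of_pos_left hxy hc)
    have hE := strictAntiOn_exp_neg_sq_mul_F1f hc
      (mem_Ici.2 (le_of_lt hx)) (mem_Ici.2 (le_of_lt hy)) hxy
    simp only [hF]
    linarith [mul_lt_mul_of_pos_left hQ hA, mul_lt_mul_of_pos_left hE hB]
  · have hcont : Continuous (Ff γ ρ αs αl kl q₀ T₀) := by
      have := continuous_erfc
      unfold Ff Qf F1f
      fun_prop
    have h0 : Ff γ ρ αs αl kl q₀ T₀ 0 = T₀ - q₀ / kl * √(π * αl) := by
      simp [Ff, Qf, F1f, erfc_zero, mul_comm αl π]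
    exact h0 ▸ (hcont.tendsto 0).mono_left nhdsWithin_le_nhds
  · have hcx : Tendsto (fun x => c * x) atTop atTop := tendsto_id.const_mul_atTop hc
    have h := ((tendsto_mul_F1f_atTop.comp hcx).const_mul A).const_add T₀ |>.sub
      ((tendsto_exp_neg_sq_atTop.mul (tendsto_F1f_atTop.comp hcx)).const_mul B)
    have hlim : T₀ + γ * ρ * αl / kl = T₀ + A * (1 / √π) - B * (0 * 0) := by
      simp only [A]
      field_simp
      ring
    rw [hF, hlim]
    exact h

/-- `F` is strictly increasing on `(0,∞)`, with `F(x) → T₀ − (q₀/k_l)√(π α_l)` as `x → 0⁺`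
and `F(x) → T₀ + γρα_l/k_l` as `x → +∞`. -/
theorem Ff_strictMonoOn_limits (γ ρ αs αl ks kl q₀ T₀ : ℝ)
    (hγ : 0 < γ) (hρ : 0 < ρ) (hαs : 0 < αs) (hαl : 0 < αl)
    (hks : 0 < ks) (hkl : 0 < kl) (hq₀ : 0 < q₀) :
    StrictMonoOn (Ff γ ρ αs αl kl q₀ T₀) (Set.Ioi (0 : ℝ)) ∧
    Tendsto (Ff γ ρ αs αl kl q₀ T₀) (nhdsWithin 0 (Set.Ioi 0))
      (nhds (T₀ - (q₀ / kl) * Real.sqrt (π * αl))) ∧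
    Tendsto (Ff γ ρ αs αl kl q₀ T₀) atTop (nhds (T₀ + γ * ρ * αl / kl)) :=
  Ff_strictMonoOn_limits_general γ ρ αs αl kl q₀ T₀ hγ hρ hαs hαl hkl hq₀
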